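/- If (P_n) is a sequence of orthogonal projections on a Hilbert space converging strongly to the identity, and the sequence (P_n A P_n) is stable (i.e. there exist m > 0 and n₀ such that for n ≥ n₀ the operators P_n A P_n : im P_n → im P_n are invertible with ‖(P_n A P_n)^{−1} P_n‖ ≤ m), then the operator A is injective and has closed range with a bounded left inverse; if additionally P_n A* P_n is stable, then A is invertible. -/

import Mathlib

open MeasureTheory Filter Topology ContinuousLinearMap

/-- Stability of the sequence of compressions `(Pₙ A Pₙ)`. -/
def GalerkinStable {H : Type*} [NormedAddCommGroup H] [InnerProductSpace ℂ H]
    (P : ℕ → H →L[ℂ] H) (A : H →L[ℂ] H) : Prop :=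
  ∃ m : ℝ, 0 < m ∧ ∃ n₀ : ℕ, ∀ n ≥ n₀, ∃ B : H →L[ℂ] H,
    (∀ x, B (P n (A (P n x))) = P n x) ∧
    (∀ x, P n (A (P n (B (P n x)))) = P n x) ∧
    ‖B ∘L P n‖ ≤ m

/-
If `Bₙ` inverts the compression `Pₙ A Pₙ` on `im Pₙ` with `‖Bₙ Pₙ‖ ≤ m`, then
`‖Pₙ x‖ = ‖Bₙ Pₙ (A Pₙ x)‖ ≤ m ‖A Pₙ x‖`, and letting `Pₙ x → x` gives `‖x‖ ≤ m ‖A x‖`.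
If `A*` is stable as well, it is bounded below, hence injective, so `(range A)ᗮ = ker A* = 0`:
the range of `A` is dense, and it is closed because `A` is bounded below.
-/

open scoped NNReal

theorem GalerkinStable.exists_norm_le_mul_norm {H : Type*} [NormedAddCommGroup H]
    [InnerProductSpace ℂ H] {P : ℕ → H →L[ℂ] H} {A : H →L[ℂ] H} (hstab : GalerkinStable P A)
    (hconv : ∀ x : H, Tendsto (fun n => P n x) atTop (𝓝 x)) :
    ∃ c : ℝ, 0 < c ∧ ∀ x : H, ‖x‖ ≤ c * ‖A x‖ := by
  obtain ⟨m, hm, n₀, hB⟩ := hstab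
  refine ⟨m, hm, fun x => ?_⟩
  have hcompressed : ∀ n ≥ n₀, ‖P n x‖ ≤ m * ‖A (P n x)‖ := by
    intro n hn
    obtain ⟨B, hleft, -, hB_le⟩ := hB n hn
    calc ‖P n x‖ = ‖(B ∘L P n) (A (P n x))‖ := by rw [comp_apply, hleft]
      _ ≤ ‖B ∘L P n‖ * ‖A (P n x)‖ := (B ∘L P n).le_opNorm _
      _ ≤ m * ‖A (P n x)‖ := by gcongr
  exact le_of_tendsto_of_tendsto (hconv x).norm
    (((A.continuous.tendsto x).comp (hconv x)).norm.const_mul m)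
    (eventually_atTop.2 ⟨n₀, hcompressed⟩)

namespace ContinuousLinearMap

variable {𝕜 E F : Type*} [RCLike 𝕜] [NormedAddCommGroup E] [InnerProductSpace 𝕜 E]
  [CompleteSpace E] [NormedAddCommGroup F] [InnerProductSpace 𝕜 F] [CompleteSpace F]

theorem range_topologicalClosure_eq_top_of_injective_adjoint (T : E →L[𝕜] F)
    (hT : Function.Injective (adjoint T)) : T.range.topologicalClosure = ⊤ := by
  rw [Submodule.topologicalClosure_eq_top_iff, orthogonal_range]
  exact LinearMap.ker_eq_bot.2 hT

theorem isUnit_of_antilipschitz_of_injective_adjoint (T : E →L[𝕜] E) {c : ℝ≥0}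
    (hT : AntilipschitzWith c T) (hT' : Function.Injective (adjoint T)) : IsUnit T :=
  isUnit_iff_bijective.2 <| (bijective_iff_dense_range_and_antilipschitz T).2
    ⟨T.range_topologicalClosure_eq_top_of_injective_adjoint hT', c, hT⟩

end ContinuousLinearMap

theorem stability_implies_invertibility_general
    {H : Type*} [NormedAddCommGroup H] [InnerProductSpace ℂ H] [CompleteSpace H]
    (P : ℕ → H →L[ℂ] H)
    (hconv : ∀ x : H, Tendsto (fun n => P n x) atTop (𝓝 x))
    (A : H →L[ℂ] H) (hstab : GalerkinStable P A) :
    (∃ c : ℝ, 0 < c ∧ ∀ x : H, ‖x‖ ≤ c * ‖A x‖) ∧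
    (GalerkinStable P (adjoint A) →
      ∃ A' : H →L[ℂ] H, A' ∘L A = 1 ∧ A ∘L A' = 1) := by
  obtain ⟨c, hc, hA⟩ := hstab.exists_norm_le_mul_norm hconv
  refine ⟨⟨c, hc, hA⟩, fun hstab' => ?_⟩
  obtain ⟨c', hc', hA'⟩ := hstab'.exists_norm_le_mul_norm hconv
  have hunit : IsUnit A := A.isUnit_of_antilipschitz_of_injective_adjoint
    (A.antilipschitz_of_bound (K := ⟨c, hc.le⟩) hA)
    ((adjoint A).antilipschitz_of_bound (K := ⟨c', hc'.le⟩) hA').injective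
  obtain ⟨A', hAA', hA'A⟩ := isUnit_iff_exists.1 hunit
  exact ⟨A', hA'A, hAA'⟩

theorem stability_implies_invertibility
    {H : Type*} [NormedAddCommGroup H] [InnerProductSpace ℂ H] [CompleteSpace H]
    (P : ℕ → H →L[ℂ] H)
    (hproj : ∀ n, (P n) ∘L (P n) = P n ∧ adjoint (P n) = P n)
    (hconv : ∀ x : H, Tendsto (fun n => P n x) atTop (𝓝 x))
    (A : H →L[ℂ] H) (hstab : GalerkinStable P A) :
    (∃ c : ℝ, 0 < c ∧ ∀ x : H, ‖x‖ ≤ c * ‖A x‖) ∧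
    (GalerkinStable P (adjoint A) →
      ∃ A' : H →L[ℂ] H, A' ∘L A = 1 ∧ A ∘L A' = 1) :=
  stability_implies_invertibility_general P hconv A hstab
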